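/- arXiv:0912.4908 — 6 statements merged into one kernel-verified Lean document; each statement's English description precedes it below -/
import Mathlib

section
/- For any positive integer q, Σ_{d|q} Λ(q/d)·φ(d) = φ(q)·Σ_{p|q} (log p)/(p−1). Moreover, if s is a proper divisor of q (that is, s | q and s < q), then Σ_{d|s} Λ(q/d)·φ(d) = φ(q)·Λ(q/s)/φ(q/s). -/
open ArithmeticFunction

noncomputable section

open Finset in
theorem lemA {p m a j q s : ℕ} (hp : p.Prime) (hm : 0 < m) (hpm : ¬ p ∣ m)
    (hj : 1 ≤ j) (hja : j ≤ a) (hq : q = p ^ a * m) (hs : s = p ^ (a - j) * m) :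
    (∑ d ∈ s.divisors, vonMangoldt (q / d) * (d.totient : ℝ)) =
      Real.log p * p ^ (a - j) * m.totient := by
  have hp0 : 0 < p := hp.pos
  have hq0 : 0 < q := by rw [hq]; positivity
  have hs0 : 0 < s := by rw [hs]; positivity
  have hcop : ∀ i : ℕ, Nat.Coprime (p ^ i) m := fun i =>
    (Nat.Prime.coprime_iff_not_dvd hp |>.2 hpm).pow_left i
  have hqs : q = p ^ j * s := by
    rw [hq, hs, ← mul_assoc, ← pow_add]; congr 2; omega
  set S : Finset ℕ := (Finset.range (a - j + 1)).image (fun i => p ^ i * m) with hS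
  have hsub : S ⊆ s.divisors := by
    intro d hd
    simp only [hS, mem_image, mem_range] at hd
    obtain ⟨i, hi, rfl⟩ := hd
    rw [Nat.mem_divisors, hs]
    exact ⟨mul_dvd_mul_right (pow_dvd_pow p (by omega)) m, by positivity⟩
  have hzero : ∀ d ∈ s.divisors, d ∉ S → vonMangoldt (q / d) * (d.totient : ℝ) = 0 := by
    intro d hd hdS
    rw [Nat.mem_divisors] at hd
    have hd0 : 0 < d := Nat.pos_of_dvd_of_pos hd.1 hs0
    obtain ⟨c, hc⟩ := hd.1
    have hqd : q / d = p ^ j * c := by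
      rw [hqs, hc, show p ^ j * (d * c) = d * (p ^ j * c) by ring,
        Nat.mul_div_cancel_left _ hd0]
    by_contra hne
    have hΛ : vonMangoldt (q / d) ≠ 0 := fun h => hne (by rw [h, zero_mul])
    rw [Ne, vonMangoldt_eq_zero_iff, not_not] at hΛ
    obtain ⟨p', k, hp', hk, hpk⟩ := hΛ
    have hp'p : p' = p := by
      have hdvd : p ∣ p' ^ k := by
        rw [hpk, hqd]; exact Dvd.dvd.mul_right (dvd_pow_self p (by omega)) c
      exact ((Nat.prime_dvd_prime_iff_eq hp hp'.nat_prime).1 (hp.dvd_of_dvd_pow hdvd)).symm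
    rw [hp'p] at hpk
    have hqd2 : q / d = p ^ k := hpk.symm
    have hdq : d ∣ q := Dvd.dvd.trans ⟨c, hc⟩ (hqs ▸ Dvd.dvd.mul_left dvd_rfl _)
    have hdval : d = q / p ^ k := by
      rw [← hqd2, Nat.div_div_self hdq hq0.ne']
    have hka : k ≤ a := by
      have h1 : p ^ k ∣ q := by rw [← hqd2]; exact Nat.div_dvd_of_dvd hdq
      have h2 : p ^ k ∣ p ^ a := Nat.Coprime.dvd_of_dvd_mul_right (hcop k) (hq ▸ h1)
      exact (Nat.pow_dvd_pow_iff_le_right hp.one_lt).1 h2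
    have hjk : j ≤ k := by
      have : p ^ j ∣ p ^ k := by rw [← hqd2, hqd]; exact Dvd.dvd.mul_right dvd_rfl c
      exact (Nat.pow_dvd_pow_iff_le_right hp.one_lt).1 this
    have hsplit : q = p ^ k * (p ^ (a - k) * m) := by
      rw [hq, ← mul_assoc, ← pow_add]; congr 2; omega
    have hdform : d = p ^ (a - k) * m := by
      rw [hdval, hsplit, Nat.mul_div_cancel_left _ (by positivity)]
    exact hdS (by
      simp only [hS, mem_image, mem_range]
      exact ⟨a - k, by omega, hdform.symm⟩)
  rw [← Finset.sum_subset hsub hzero]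
  rw [hS, Finset.sum_image (by
    intro i _ i' _ h
    exact Nat.pow_right_injective hp.two_le (Nat.eq_of_mul_eq_mul_right hm h))]
  have hterm : ∀ i ∈ Finset.range (a - j + 1),
      vonMangoldt (q / (p ^ i * m)) * ((p ^ i * m).totient : ℝ)
        = Real.log p * ((p ^ i).totient : ℝ) * m.totient := by
    intro i hi
    rw [mem_range] at hi
    have hsplit : p ^ i * m * p ^ (a - i) = q := by
      rw [hq, mul_right_comm, ← pow_add]; congr 2; omega
    have hdiv : q / (p ^ i * m) = p ^ (a - i) := by
      rw [← hsplit, Nat.mul_div_cancel_left _ (by positivity)]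
    rw [hdiv, Nat.totient_mul (hcop i), vonMangoldt_apply_pow (by omega),
      vonMangoldt_apply_prime hp]
    push_cast
    ring
  rw [Finset.sum_congr rfl hterm]
  have hsum : ∑ i ∈ Finset.range (a - j + 1), ((p ^ i).totient : ℝ) = (p ^ (a - j) : ℕ) := by
    norm_cast
    rw [← Nat.sum_divisors_prime_pow hp]
    exact Nat.sum_totient _
  calc ∑ i ∈ Finset.range (a - j + 1), Real.log p * ((p ^ i).totient : ℝ) * m.totient
      = (Real.log p * m.totient) * ∑ i ∈ Finset.range (a - j + 1), ((p ^ i).totient : ℝ) := by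
        rw [Finset.mul_sum]; exact Finset.sum_congr rfl fun i _ => by ring
    _ = Real.log p * p ^ (a - j) * m.totient := by rw [hsum]; push_cast; ring

theorem lemB (q : ℕ) (hq : 0 < q) (s : ℕ) (hsq : s ∣ q) (hslt : s < q) :
    (∑ d ∈ s.divisors, vonMangoldt (q / d) * (d.totient : ℝ)) =
      (q.totient : ℝ) * vonMangoldt (q / s) / ((q / s).totient : ℝ) := by
  have hs0 : 0 < s := Nat.pos_of_dvd_of_pos hsq hq
  set t := q / s with ht
  have hts : t * s = q := Nat.div_mul_cancel hsq
  have ht1 : 1 < t := by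
    rcases Nat.lt_or_ge t 2 with h | h
    · interval_cases t <;> omega
    · omega
  by_cases hpp : IsPrimePow t
  · obtain ⟨p, k, hp', hk, hpk⟩ := hpp
    have hp : p.Prime := hp'.nat_prime
    set a := q.factorization p with ha
    set m := q / p ^ a with hm
    have hpq : p ∣ q := by
      refine dvd_trans (dvd_trans (dvd_pow_self p hk.ne') ?_) ⟨s, hts.symm⟩
      rw [hpk]
    have hqam : q = p ^ a * m := (Nat.ordProj_mul_ordCompl_eq_self q p).symm
    have hpm : ¬ p ∣ m := Nat.not_dvd_ordCompl hp hq.ne'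
    have hm0 : 0 < m := Nat.ordCompl_pos p hq.ne'
    have hka : k ≤ a := by
      rw [ha]
      refine (Nat.Prime.pow_dvd_iff_le_factorization hp hq.ne').1 ?_
      rw [hpk]; exact ⟨s, hts.symm⟩
    have hsform : s = p ^ (a - k) * m := by
      have hsplit : q = p ^ k * (p ^ (a - k) * m) := by
        rw [hqam, ← mul_assoc, ← pow_add]; congr 2; omega
      have h2 : s = q / p ^ k := by
        rw [hpk, ht]; exact (Nat.div_div_self hsq hq.ne').symm
      rw [h2, hsplit, Nat.mul_div_cancel_left _ (pow_pos hp.pos _)]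
    rw [lemA hp hm0 hpm hk hka hqam hsform]
    -- RHS computation
    rw [← hpk]
    rw [vonMangoldt_apply_pow hk.ne', vonMangoldt_apply_prime hp]
    have ha1 : 1 ≤ a := le_trans hk hka
    have htotq : (q.totient : ℝ) = p ^ (a - 1) * (p - 1) * m.totient := by
      rw [hqam, Nat.totient_mul (Nat.Coprime.pow_left a ((Nat.Prime.coprime_iff_not_dvd hp).2 hpm)),
        Nat.totient_prime_pow hp (by omega)]
      push_cast [Nat.cast_sub hp.one_le]
      ring
    have htott : (((p ^ k).totient : ℕ) : ℝ) = p ^ (k - 1) * (p - 1) := by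
      rw [Nat.totient_prime_pow hp hk]
      push_cast [Nat.cast_sub hp.one_le]
      ring
    rw [htotq, htott]
    have hp1 : (1 : ℝ) < p := by exact_mod_cast hp.one_lt
    have hne : (p : ℝ) ^ (k - 1) * ((p : ℝ) - 1) ≠ 0 :=
      (mul_pos (pow_pos (by linarith) _) (by linarith)).ne'
    rw [eq_div_iff hne]
    rw [show ((p : ℝ)) ^ (a - 1) = (p : ℝ) ^ (a - k) * (p : ℝ) ^ (k - 1) from by
      rw [← pow_add]; congr 1; omega]
    ring
  · have hΛ0 : vonMangoldt t = 0 := vonMangoldt_eq_zero_iff.2 hpp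
    rw [hΛ0, mul_zero, zero_div]
    refine Finset.sum_eq_zero fun d hd => ?_
    rw [Nat.mem_divisors] at hd
    obtain ⟨c, hc⟩ := hd.1
    have hd0 : 0 < d := Nat.pos_of_dvd_of_pos ⟨c, hc⟩ hs0
    have hqd : q / d = t * c := by
      rw [← hts, hc, show t * (d * c) = d * (t * c) by ring, Nat.mul_div_cancel_left _ hd0]
    have : vonMangoldt (q / d) = 0 := by
      rw [vonMangoldt_eq_zero_iff]
      intro hpp2
      apply hpp
      obtain ⟨p, k, hp', hk, hpk⟩ := hpp2
      have htd : t ∣ p ^ k := by rw [hpk, hqd]; exact Dvd.intro c rfl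
      obtain ⟨l, hl, hlt⟩ := (Nat.dvd_prime_pow hp'.nat_prime).1 htd
      exact ⟨p, l, hp', by
        rcases Nat.eq_zero_or_pos l with h | h
        · exfalso; rw [h, pow_zero] at hlt; omega
        · exact h, hlt.symm⟩
    rw [this, zero_mul]
theorem lemC (q : ℕ) (hq : 0 < q) :
    (∑ d ∈ q.divisors, vonMangoldt (q / d) * (d.totient : ℝ)) =
      ∑ p ∈ q.primeFactors, ∑ d ∈ (q / p).divisors, vonMangoldt (q / d) * (d.totient : ℝ) := by
  symm
  have step1 : ∀ p ∈ q.primeFactors,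
      (∑ d ∈ (q / p).divisors, vonMangoldt (q / d) * (d.totient : ℝ)) =
        ∑ d ∈ q.divisors, if d ∈ (q / p).divisors then vonMangoldt (q / d) * (d.totient : ℝ)
          else 0 := by
    intro p hp
    rw [Finset.sum_ite_mem, Finset.inter_eq_right.2
      (Nat.divisors_subset_of_dvd hq.ne' (Nat.div_dvd_of_dvd (Nat.dvd_of_mem_primeFactors hp)))]
  rw [Finset.sum_congr rfl step1, Finset.sum_comm]
  refine Finset.sum_congr rfl fun d hd => ?_
  rw [Nat.mem_divisors] at hd
  have hdq : d ∣ q := hd.1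
  rcases eq_or_ne (vonMangoldt (q / d)) 0 with h0 | h0
  · rw [h0, zero_mul]
    exact Finset.sum_eq_zero fun p _ => by simp [h0]
  · rw [Ne, vonMangoldt_eq_zero_iff, not_not] at h0
    obtain ⟨p0, k0, hp0', hk0, hpk0⟩ := h0
    have hp0 : p0.Prime := hp0'.nat_prime
    have hfil : q.primeFactors.filter (fun p => d ∈ (q / p).divisors) = {p0} := by
      ext p
      simp only [Finset.mem_filter, Finset.mem_singleton, Nat.mem_primeFactors,
        Nat.mem_divisors]
      constructor
      · rintro ⟨⟨hp, hpq, -⟩, hddvd, -⟩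
        have h1 : p * d ∣ q := (Nat.dvd_div_iff_mul_dvd hpq).1 hddvd
        have h2 : p ∣ q / d := (Nat.dvd_div_iff_mul_dvd hdq).2 (by rwa [mul_comm] at h1)
        rw [← hpk0] at h2
        exact (Nat.prime_dvd_prime_iff_eq hp hp0).1 (hp.dvd_of_dvd_pow h2)
      · rintro rfl
        have hp0qd : p ∣ q / d := by
          rw [← hpk0]; exact dvd_pow_self p hk0.ne'
        have hp0q : p ∣ q := hp0qd.trans (Nat.div_dvd_of_dvd hdq)
        refine ⟨⟨hp0, hp0q, hq.ne'⟩, ?_, ?_⟩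
        · rw [Nat.dvd_div_iff_mul_dvd hp0q, mul_comm]
          exact (Nat.dvd_div_iff_mul_dvd hdq).1 hp0qd
        · exact (Nat.div_pos (Nat.le_of_dvd hq hp0q) hp0.pos).ne'
    rw [← Finset.sum_filter, hfil, Finset.sum_singleton]

/-- **Lemma (von Mangoldt–totient divisor sums).** For every positive integer `q`,
`Σ_{d∣q} Λ(q/d) φ(d) = φ(q) Σ_{p∣q} log p/(p−1)`; and for every proper divisor `s` of `q`,
`Σ_{d∣s} Λ(q/d) φ(d) = φ(q) Λ(q/s)/φ(q/s)`. -/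
theorem vonMangoldt_totient_divisor_sums (q : ℕ) (hq : 0 < q) :
    (∑ d ∈ q.divisors, vonMangoldt (q / d) * (d.totient : ℝ)) =
      (q.totient : ℝ) * ∑ p ∈ q.primeFactors, Real.log p / (p - 1) ∧
    ∀ s : ℕ, s ∣ q → s < q →
      (∑ d ∈ s.divisors, vonMangoldt (q / d) * (d.totient : ℝ)) =
        (q.totient : ℝ) * vonMangoldt (q / s) / ((q / s).totient : ℝ) := by
  refine ⟨?_, fun s hsq hslt => lemB q hq s hsq hslt⟩
  rw [lemC q hq, Finset.mul_sum]
  refine Finset.sum_congr rfl fun p hp => ?_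
  have hp' := Nat.prime_of_mem_primeFactors hp
  have hpq := Nat.dvd_of_mem_primeFactors hp
  rw [lemB q hq (q / p) (Nat.div_dvd_of_dvd hpq) (Nat.div_lt_self hq hp'.one_lt),
    Nat.div_div_self hpq hq.ne', vonMangoldt_apply_prime hp', Nat.totient_prime hp',
    Nat.cast_sub hp'.one_le, Nat.cast_one, mul_div_assoc]
end
end

section
/- For any positive integer q, Σ_{χ mod q} log q_χ = φ(q)·( log q − Σ_{p|q} (log p)/(p−1) ), where q_χ denotes the conductor of the Dirichlet character χ. Moreover, if a is a reduced residue modulo q with a ≢ 1 (mod q), then Σ_{χ mod q} χ(a)·log q_χ = −φ(q)·Λ(q/gcd(q,a−1))/φ(q/gcd(q,a−1)), as an identity of complex numbers. -/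
/-!
Since `q_χ ∣ q`, we have `log q_χ = log q - ∑_{d ∣ q/q_χ} Λ(d)`, and swapping the sums gives
`∑_χ χ(a) log q_χ = [a = 1] φ(q) log q - ∑_{d ∣ q} Λ(d) ∑_{χ : q_χ ∣ q/d} χ(a)`.
The characters of conductor dividing `m ∣ q` are exactly those induced from level `m`, so by
orthogonality the inner sum is `φ(q/d)` if `a ≡ 1 (mod q/d)` and `0` otherwise; and
`a ≡ 1 (mod q/d)` iff `n ∣ d` with `n = q/(q, a-1)`. It remains to evaluate
`∑_{d ∣ q, n ∣ d} Λ(d) φ(q/d)`, a sum over the prime powers `p^k ∣ q` divisible by `n`, using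
`∑_{j ≤ k ≤ v_p(q)} φ(q/p^k) = φ(q)/φ(p^j)` for `j ≥ 1`.
-/

open DirichletCharacter Complex ArithmeticFunction

noncomputable section

open Finset
open scoped Nat

theorem Nat.divisors_filter_dvd_div {n c : ℕ} (hn : n ≠ 0) (hc : c ∣ n) :
    {d ∈ n.divisors | c ∣ n / d} = (n / c).divisors := by
  have hnc : n / c ≠ 0 := (Nat.div_pos (Nat.le_of_dvd (Nat.pos_of_ne_zero hn) hc)
    (Nat.pos_of_dvd_of_pos hc (Nat.pos_of_ne_zero hn))).ne'
  ext d
  simp only [mem_filter, Nat.mem_divisors, ne_eq, hn, hnc, not_false_eq_true, and_true]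
  rw [Nat.dvd_div_iff_mul_dvd hc]
  constructor
  · rintro ⟨hd, hcd⟩
    rwa [Nat.dvd_div_iff_mul_dvd hd, mul_comm] at hcd
  · intro h
    have hd : d ∣ n := (Nat.dvd_mul_left d c).trans h
    exact ⟨hd, by rwa [Nat.dvd_div_iff_mul_dvd hd, mul_comm]⟩

theorem ArithmeticFunction.sum_vonMangoldt_filter_dvd_div {n c : ℕ} (hn : n ≠ 0) (hc : c ∣ n) :
    ∑ d ∈ n.divisors with c ∣ n / d, Λ d = Real.log n - Real.log c := by
  have hc0 : c ≠ 0 := by rintro rfl; exact hn (Nat.eq_zero_of_zero_dvd hc)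
  rw [Nat.divisors_filter_dvd_div hn hc, vonMangoldt_sum, Nat.cast_div hc (by exact_mod_cast hc0),
    Real.log_div (by exact_mod_cast hn) (by exact_mod_cast hc0)]

theorem Nat.div_dvd_iff_div_gcd_dvd {n d v : ℕ} (hn : n ≠ 0) (hd : d ∣ n) :
    n / d ∣ v ↔ n / n.gcd v ∣ d := by
  have hpos : ∀ {c}, c ∣ n → 0 < c := fun hc ↦ Nat.pos_of_dvd_of_pos hc (Nat.pos_of_ne_zero hn)
  rw [← Nat.dvd_gcd_iff.trans (and_iff_right (Nat.div_dvd_of_dvd hd)),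
    Nat.div_dvd_iff_dvd_mul hd (hpos hd),
    Nat.div_dvd_iff_dvd_mul (Nat.gcd_dvd_left n v) (hpos (Nat.gcd_dvd_left n v)), mul_comm]

theorem Nat.sum_divisors_eq_sum_primeFactors_pow {M : Type*} [AddCommMonoid M] {n : ℕ}
    (hn : n ≠ 0) {f : ℕ → M} (hf : ∀ d, ¬IsPrimePow d → f d = 0) :
    ∑ d ∈ n.divisors, f d = ∑ p ∈ n.primeFactors, ∑ k ∈ Icc 1 (n.factorization p), f (p ^ k) := by
  rw [← sum_filter_of_ne (p := IsPrimePow) fun d _ hd ↦ by_contra (hd ∘ hf d), sum_sigma']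
  symm
  refine sum_bij (fun x _ ↦ x.1 ^ x.2) ?_ ?_ ?_ fun _ _ ↦ rfl
  · rintro ⟨p, k⟩ hpk
    simp only [mem_sigma, Nat.mem_primeFactors, mem_Icc] at hpk
    obtain ⟨⟨hp, -, -⟩, hk, hke⟩ := hpk
    exact mem_filter.mpr ⟨Nat.mem_divisors.mpr ⟨(hp.pow_dvd_iff_le_factorization hn).mpr hke, hn⟩,
      ⟨p, k, hp.prime, hk, rfl⟩⟩
  · rintro ⟨p, k⟩ hpk ⟨p', k'⟩ hpk' h
    simp only [mem_sigma, Nat.mem_primeFactors, mem_Icc] at hpk hpk' h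
    have hpp' : p = p' := by
      rw [← hpk.1.1.pow_minFac (by omega : k ≠ 0), ← hpk'.1.1.pow_minFac (by omega : k' ≠ 0)]
      exact congrArg Nat.minFac h
    subst hpp'
    rw [Nat.pow_right_injective hpk.1.1.two_le h]
  · intro d hd
    obtain ⟨hd, p, k, hp, hk, rfl⟩ := mem_filter.mp hd
    rw [← Nat.prime_iff] at hp
    have hdn := Nat.dvd_of_mem_divisors hd
    refine ⟨⟨p, k⟩, ?_, rfl⟩
    simp only [mem_sigma, Nat.mem_primeFactors, mem_Icc]
    exact ⟨⟨hp, (dvd_pow_self p hk.ne').trans hdn, hn⟩, hk,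
      (hp.pow_dvd_iff_le_factorization hn).mp hdn⟩

theorem ArithmeticFunction.sum_divisors_vonMangoldt_mul {n : ℕ} (hn : n ≠ 0) (f : ℕ → ℝ) :
    ∑ d ∈ n.divisors, Λ d * f d =
      ∑ p ∈ n.primeFactors, Real.log p * ∑ k ∈ Icc 1 (n.factorization p), f (p ^ k) := by
  rw [Nat.sum_divisors_eq_sum_primeFactors_pow hn fun d hd ↦ by
    rw [vonMangoldt_eq_zero_iff.mpr hd, zero_mul]]
  refine sum_congr rfl fun p hp ↦ ?_
  rw [mul_sum]
  refine sum_congr rfl fun k hk ↦ ?_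
  rw [vonMangoldt_apply_pow (by grind), vonMangoldt_apply_prime (Nat.prime_of_mem_primeFactors hp)]

theorem Nat.sum_range_totient_prime_pow {p : ℕ} (hp : p.Prime) (n : ℕ) :
    ∑ i ∈ range (n + 1), φ (p ^ i) = p ^ n := by
  rw [← Nat.sum_divisors_prime_pow hp, Nat.sum_totient]

theorem Nat.sum_totient_div_prime_pow_mul_totient {n p j : ℕ} (hn : n ≠ 0) (hp : p.Prime)
    (hj : 0 < j) (hjn : j ≤ n.factorization p) :
    (∑ k ∈ Icc j (n.factorization p), φ (n / p ^ k)) * φ (p ^ j) = φ n := by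
  set e := n.factorization p
  set m := ordCompl[p] n
  have hm : Nat.Coprime p m := Nat.coprime_ordCompl hp hn
  have hdiv : ∀ k ∈ Icc j e, φ (n / p ^ k) = φ (p ^ (e - k)) * φ m := fun k hk ↦ by
    rw [← Nat.totient_mul (hm.pow_left _)]
    congr 1
    refine Nat.div_eq_of_eq_mul_left (pow_pos hp.pos k) ?_
    rw [mul_right_comm, ← pow_add, Nat.sub_add_cancel (mem_Icc.mp hk).2,
      Nat.ordProj_mul_ordCompl_eq_self]
  have hsum : ∑ k ∈ Icc j e, φ (p ^ (e - k)) = p ^ (e - j) := by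
    rw [← Nat.sum_range_totient_prime_pow hp]
    exact sum_nbij' (e - ·) (e - ·) (by simp; omega) (by simp; omega)
      (by simp; omega) (by simp; omega) fun _ _ ↦ rfl
  have hpow : p ^ (e - j) * φ (p ^ j) = φ (p ^ e) := by
    rw [Nat.totient_prime_pow hp hj, Nat.totient_prime_pow hp (hj.trans_le hjn), ← mul_assoc,
      ← pow_add]
    congr 2
    omega
  rw [sum_congr rfl hdiv, ← sum_mul, hsum, mul_right_comm, hpow, ← Nat.totient_mul (hm.pow_left _),
    Nat.ordProj_mul_ordCompl_eq_self]

namespace ArithmeticFunction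

theorem sum_divisors_vonMangoldt_mul_totient_div {n : ℕ} (hn : n ≠ 0) :
    ∑ d ∈ n.divisors, Λ d * φ (n / d) = φ n * ∑ p ∈ n.primeFactors, Real.log p / (p - 1) := by
  rw [sum_divisors_vonMangoldt_mul hn, mul_sum]
  refine sum_congr rfl fun p hp ↦ ?_
  have hp' := Nat.prime_of_mem_primeFactors hp
  have h := Nat.sum_totient_div_prime_pow_mul_totient hn hp' one_pos
    (hp'.factorization_pos_of_dvd hn (Nat.dvd_of_mem_primeFactors hp))
  rw [pow_one, Nat.totient_prime hp'] at h
  have hp1 : (p : ℝ) - 1 ≠ 0 := sub_ne_zero.mpr (by exact_mod_cast hp'.one_lt.ne')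
  rw [← h]
  push_cast [Nat.cast_sub hp'.one_le]
  field_simp

theorem sum_divisors_filter_dvd_vonMangoldt_mul_totient_div {n m : ℕ} (hn : n ≠ 0) (hm : 1 < m)
    (hmn : m ∣ n) :
    ∑ d ∈ n.divisors with m ∣ d, Λ d * φ (n / d) = φ n * (Λ m / φ m) := by
  rw [sum_filter, sum_congr rfl fun d _ ↦ (mul_ite_zero ..).symm, sum_divisors_vonMangoldt_mul hn]
  by_cases hpow : IsPrimePow m
  · obtain ⟨P, J, hP, hJ, rfl⟩ := hpow
    rw [← Nat.prime_iff] at hP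
    have hJe : J ≤ n.factorization P := (hP.pow_dvd_iff_le_factorization hn).mp hmn
    have hPn : P ∈ n.primeFactors :=
      Nat.mem_primeFactors.mpr ⟨hP, (dvd_pow_self P hJ.ne').trans hmn, hn⟩
    rw [sum_eq_single_of_mem P hPn fun p hp hpP ↦ ?other]
    case other =>
      refine mul_eq_zero_of_right _ (sum_eq_zero fun k _ ↦ if_neg fun h ↦ hpP ?_)
      have hPp := hP.dvd_of_dvd_pow ((dvd_pow_self P hJ.ne').trans h)
      exact ((Nat.prime_dvd_prime_iff_eq hP (Nat.prime_of_mem_primeFactors hp)).mp hPp).symm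
    have hfilter : {k ∈ Icc 1 (n.factorization P) | P ^ J ∣ P ^ k} = Icc J (n.factorization P) := by
      ext k
      simp only [mem_filter, mem_Icc, Nat.pow_dvd_pow_iff_le_right hP.one_lt]
      omega
    have h := Nat.sum_totient_div_prime_pow_mul_totient hn hP hJ hJe
    have hφ : (φ (P ^ J) : ℝ) ≠ 0 := by exact_mod_cast (Nat.totient_pos.mpr (pow_pos hP.pos J)).ne'
    rw [← sum_filter, hfilter, vonMangoldt_apply_pow hJ.ne', vonMangoldt_apply_prime hP, ← h]
    push_cast
    field_simp
  · rw [vonMangoldt_eq_zero_iff.mpr hpow, zero_div, mul_zero]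
    refine sum_eq_zero fun p hp ↦ mul_eq_zero_of_right _ (sum_eq_zero fun k _ ↦ if_neg fun h ↦ ?_)
    obtain ⟨i, -, rfl⟩ := (Nat.dvd_prime_pow (Nat.prime_of_mem_primeFactors hp)).mp h
    refine hpow ⟨p, i, (Nat.prime_of_mem_primeFactors hp).prime, Nat.pos_of_ne_zero ?_, rfl⟩
    rintro rfl
    exact hm.ne' (pow_zero p)

end ArithmeticFunction

theorem ZMod.cast_eq_one_iff_dvd_val_sub_one {q d : ℕ} [NeZero q] (hd : d ∣ q) (x : ZMod q) :
    (ZMod.cast x : ZMod d) = 1 ↔ d ∣ (x - 1).val := by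
  rw [← ZMod.natCast_eq_zero_iff, ← ZMod.cast_eq_val, ZMod.cast_sub hd, ZMod.cast_one hd,
    sub_eq_zero]

theorem ZMod.one_lt_div_gcd_val_sub_one {q : ℕ} [NeZero q] {x : ZMod q} (hx : x ≠ 1) :
    1 < q / q.gcd (x - 1).val := by
  have hv : (x - 1).val ≠ 0 := by rwa [ne_eq, ZMod.val_eq_zero, sub_eq_zero]
  rw [Nat.lt_div_iff_mul_lt' (Nat.gcd_dvd_left _ _), mul_one]
  exact (Nat.gcd_le_right _ (Nat.pos_of_ne_zero hv)).trans_lt (ZMod.val_lt _)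

namespace DirichletCharacter

theorem sum_apply_of_conductor_dvd {q d : ℕ} [NeZero q] (hd : d ∣ q) (a : (ZMod q)ˣ) :
    ∑ χ : DirichletCharacter ℂ q with χ.conductor ∣ d, χ a =
      if d ∣ ((a : ZMod q) - 1).val then (d.totient : ℂ) else 0 := by
  have : NeZero d := ⟨by rintro rfl; exact NeZero.ne q (Nat.eq_zero_of_zero_dvd hd)⟩
  have hfilter : ({χ : DirichletCharacter ℂ q | χ.conductor ∣ d} : Finset _) =
      univ.image (changeLevel hd) := by
    ext χ
    simp only [mem_filter, mem_univ, true_and, mem_image,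
      ← mem_conductorSet_iff_conductor_dvd χ hd, mem_conductorSet_iff]
    exact ⟨fun ⟨_, ψ, hψ⟩ ↦ ⟨ψ, hψ.symm⟩, fun ⟨ψ, hψ⟩ ↦ hψ ▸ changeLevel_factorsThrough ψ hd⟩
  rw [hfilter, sum_image fun _ _ _ _ h ↦ changeLevel_injective hd h]
  simp only [changeLevel_eq_cast_of_dvd _ hd, sum_characters_eq,
    ZMod.cast_eq_one_iff_dvd_val_sub_one hd]

theorem sum_apply_mul_log_conductor {q : ℕ} [NeZero q] (a : (ZMod q)ˣ) :
    ∑ χ : DirichletCharacter ℂ q, χ a * (Real.log χ.conductor : ℂ) =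
      ((if (a : ZMod q) = 1 then φ q * Real.log q else 0 : ℝ) : ℂ) -
        ((∑ d ∈ q.divisors with q / q.gcd ((a : ZMod q) - 1).val ∣ d,
          Λ d * φ (q / d) : ℝ) : ℂ) := by
  have hq : q ≠ 0 := NeZero.ne q
  have hlog (χ : DirichletCharacter ℂ q) : (Real.log χ.conductor : ℂ) =
      Real.log q - ∑ d ∈ q.divisors, if χ.conductor ∣ q / d then (Λ d : ℂ) else 0 := by
    rw [← sum_filter, ← ofReal_sum, sum_vonMangoldt_filter_dvd_div hq χ.conductor_dvd_level]
    push_cast; ring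
  calc ∑ χ : DirichletCharacter ℂ q, χ a * (Real.log χ.conductor : ℂ)
      = Real.log q * ∑ χ : DirichletCharacter ℂ q, χ a -
          ∑ d ∈ q.divisors,
            (Λ d : ℂ) * ∑ χ : DirichletCharacter ℂ q with χ.conductor ∣ q / d, χ a := by
        simp only [hlog, mul_sub, sum_sub_distrib, mul_sum, sum_filter, mul_ite, mul_zero]
        rw [sum_comm]
        simp only [mul_comm]
    _ = _ := by
        rw [sum_characters_eq, sum_filter, ofReal_sum]
        congr 1
        · split_ifs <;> simp [mul_comm]
        · refine sum_congr rfl fun d hd ↦ ?_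
          have hdq := Nat.dvd_of_mem_divisors hd
          simp only [sum_apply_of_conductor_dvd (Nat.div_dvd_of_dvd hdq),
            Nat.div_dvd_iff_div_gcd_dvd hq hdq]
          split_ifs <;> simp

end DirichletCharacter

/-- **Proposition (sums of `log` of conductors over characters).** For a positive integer `q`:
`Σ_{χ mod q} log q_χ = φ(q)(log q − Σ_{p∣q} log p/(p−1))`, where `q_χ` is the conductor of `χ`;
and for a reduced residue `a ≢ 1 (mod q)`,
`Σ_{χ mod q} χ(a) log q_χ = −φ(q) Λ(q/(q,a−1))/φ(q/(q,a−1))`. -/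
theorem sum_log_conductor (q : ℕ) [NeZero q] :
    (∑ χ : DirichletCharacter ℂ q, Real.log χ.conductor) =
      (q.totient : ℝ) * (Real.log q - ∑ p ∈ q.primeFactors, Real.log p / (p - 1)) ∧
    ∀ a : ZMod q, IsUnit a → a ≠ 1 →
      (∑ χ : DirichletCharacter ℂ q, χ a * (Real.log χ.conductor : ℂ)) =
        -(q.totient : ℂ) *
          ((vonMangoldt (q / Nat.gcd q (a - 1).val) / ((q / Nat.gcd q (a - 1).val).totient : ℝ) : ℝ) : ℂ) := by
  have hq : q ≠ 0 := NeZero.ne q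
  refine ⟨?_, fun a ha hne ↦ ?_⟩
  · have h := sum_apply_mul_log_conductor (1 : (ZMod q)ˣ)
    simp only [Units.val_one, map_one, one_mul, if_true, sub_self, ZMod.val_zero,
      Nat.gcd_zero_right, Nat.div_self (Nat.pos_of_ne_zero hq), Nat.one_dvd, filter_true] at h
    rw [mul_sub, ← sum_divisors_vonMangoldt_mul_totient_div hq]
    exact_mod_cast h
  · lift a to (ZMod q)ˣ using ha
    rw [sum_apply_mul_log_conductor, if_neg hne,
      sum_divisors_filter_dvd_vonMangoldt_mul_totient_div hq (ZMod.one_lt_div_gcd_val_sub_one hne)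
        (Nat.div_dvd_of_dvd (Nat.gcd_dvd_left _ _))]
    push_cast
    ring
end
end

section
/- Let q be a positive integer, p a prime, e a positive integer, and r a reduced residue modulo q; for each Dirichlet character χ mod q let χ* denote the primitive character inducing χ. If p ∤ q, then Σ_{χ mod q} χ(r)·( χ*(p^e) − χ(p^e) ) = 0. If p | q and ν ≥ 1 is the integer with p^ν ∥ q, then Σ_{χ mod q} χ(r)·( χ*(p^e) − χ(p^e) ) equals φ(q/p^ν) if r·p^e ≡ 1 (mod q/p^ν), and equals 0 otherwise. -/
/-!
For `p ∤ q` the two values agree termwise, since `pᵉ` is a unit mod `q`. For `p ∣ q` every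
`χ(pᵉ)` vanishes, and so does `χ*(pᵉ)` unless the conductor of `χ` is prime to `p`, i.e. divides
`Q = q / p^ν`. The characters with conductor dividing `Q` are exactly the lifts of the characters
`ψ` mod `Q`, for which `χ(r) χ*(pᵉ) = ψ(r pᵉ)`; orthogonality mod `Q` finishes the proof.
-/

open DirichletCharacter Complex

attribute [local instance] Classical.propDecidable

noncomputable section

namespace DirichletCharacter

variable {R : Type*} [CommMonoidWithZero R] {n : ℕ}

lemma apply_prime_pow_eq_zero_of_dvd (χ : DirichletCharacter R n) {p : ℕ} (hp : p.Prime)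
    (hpn : p ∣ n) {e : ℕ} (he : e ≠ 0) : χ ((p : ZMod n) ^ e) = 0 := by
  rw [map_pow, χ.map_nonunit (mt (ZMod.isUnit_prime_iff_not_dvd hp).mp (not_not.mpr hpn)),
    zero_pow he]

lemma primitiveCharacter_natCast_of_coprime (χ : DirichletCharacter R n) {a : ℕ}
    (ha : a.Coprime n) : χ.primitiveCharacter a = χ a := by
  exact_mod_cast χ.primitiveCharacter_apply_of_isCoprime (Nat.isCoprime_iff_coprime.mpr ha)

lemma primitiveCharacter_changeLevel_natCast_of_coprime [Nontrivial R] {d : ℕ} [NeZero n]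
    (hd : d ∣ n) (ψ : DirichletCharacter R d) {a : ℕ} (ha : a.Coprime d) :
    (changeLevel hd ψ).primitiveCharacter a = ψ a := by
  rw [← ψ.primitiveCharacter_natCast_of_coprime ha]
  exact_mod_cast primitiveCharacter_changeLevel_apply hd ψ a

lemma changeLevel_apply_of_isUnit {d : ℕ} (hd : d ∣ n) (ψ : DirichletCharacter R d)
    {a : ZMod n} (ha : IsUnit a) : changeLevel hd ψ a = ψ (ZMod.castHom hd (ZMod d) a) := by
  simpa only [ha.unit_spec, ZMod.castHom_apply] using changeLevel_eq_cast_of_dvd ψ hd ha.unit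

lemma sum_eq_sum_changeLevel_of_conductor_dvd {M : Type*} [AddCommMonoid M] [NeZero n] {d : ℕ}
    [Fintype (DirichletCharacter R n)] [Fintype (DirichletCharacter R d)] (hd : d ∣ n)
    (F : DirichletCharacter R n → M)
    (hF : ∀ χ : DirichletCharacter R n, ¬ χ.conductor ∣ d → F χ = 0) :
    ∑ χ, F χ = ∑ ψ : DirichletCharacter R d, F (changeLevel hd ψ) := by
  rw [← Finset.sum_image fun ψ _ ψ' _ h => changeLevel_injective hd h]
  refine (Finset.sum_subset (Finset.subset_univ _) fun χ _ hχ => hF χ fun hcd => hχ ?_).symm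
  obtain ⟨-, ψ, rfl⟩ := (χ.mem_conductorSet_iff_conductor_dvd hd).mpr hcd
  exact Finset.mem_image_of_mem _ (Finset.mem_univ ψ)

end DirichletCharacter

/-- **Proposition (semi-orthogonality relations).** Let `p` be a prime, `e ≥ 1`, and `r` a
reduced residue mod `q`; for each character `χ` mod `q` let `χ*` be the primitive character
inducing it. If `p ∤ q` then `Σ_{χ mod q} χ(r)(χ*(pᵉ) − χ(pᵉ)) = 0`. If `p ∣ q` and
`p^ν ∥ q`, then the sum is `φ(q/p^ν)` when `r·pᵉ ≡ 1 (mod q/p^ν)`, and `0` otherwise. -/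
theorem semi_orthogonality (q : ℕ) [NeZero q] (p : ℕ) (hp : p.Prime) (e : ℕ) (he : 1 ≤ e)
    (r : ZMod q) (hr : IsUnit r) :
    (¬ p ∣ q →
      (∑ χ : DirichletCharacter ℂ q,
        χ r * (χ.primitiveCharacter ((p : ZMod χ.conductor) ^ e) - χ ((p : ZMod q) ^ e))) = 0) ∧
    (p ∣ q →
      (∑ χ : DirichletCharacter ℂ q,
        χ r * (χ.primitiveCharacter ((p : ZMod χ.conductor) ^ e) - χ ((p : ZMod q) ^ e))) =
      if ZMod.castHom (Nat.div_dvd_of_dvd (Nat.ordProj_dvd q p))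
            (ZMod (q / p ^ (q.factorization p))) r * (p : ZMod (q / p ^ (q.factorization p))) ^ e
          = 1
      then ((q / p ^ (q.factorization p)).totient : ℂ) else 0) := by
  refine ⟨fun hpq => Finset.sum_eq_zero fun χ _ => ?_, fun hpq => ?_⟩
  · have hcop : (p ^ e).Coprime q := Nat.Coprime.pow_left e (hp.coprime_iff_not_dvd.mpr hpq)
    rw [← Nat.cast_pow, χ.primitiveCharacter_natCast_of_coprime hcop, Nat.cast_pow, sub_self,
      mul_zero]
  set Q := q / p ^ q.factorization p
  have hQq : Q ∣ q := Nat.div_dvd_of_dvd (Nat.ordProj_dvd q p)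
  have : NeZero Q := ⟨(Nat.ordCompl_pos p (NeZero.ne q)).ne'⟩
  have he0 : e ≠ 0 := by omega
  have hcop : (p ^ e).Coprime Q := Nat.Coprime.pow_left e (Nat.coprime_ordCompl hp (NeZero.ne q))
  calc
    _ = ∑ χ : DirichletCharacter ℂ q,
          χ r * χ.primitiveCharacter ((p : ZMod χ.conductor) ^ e) := by
      simp only [apply_prime_pow_eq_zero_of_dvd _ hp hpq he0, sub_zero]
    _ = ∑ ψ : DirichletCharacter ℂ Q, ψ (ZMod.castHom hQq (ZMod Q) r * (p : ZMod Q) ^ e) := by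
      rw [sum_eq_sum_changeLevel_of_conductor_dvd hQq]
      · refine Finset.sum_congr rfl fun ψ _ => ?_
        rw [← Nat.cast_pow, primitiveCharacter_changeLevel_natCast_of_coprime hQq ψ hcop,
          changeLevel_apply_of_isUnit hQq ψ hr, map_mul, Nat.cast_pow]
      · intro χ hχ
        have hpc : p ∣ χ.conductor := by_contra fun hpc =>
          hχ (Nat.dvd_ordCompl_of_dvd_not_dvd χ.conductor_dvd_level hpc)
        rw [apply_prime_pow_eq_zero_of_dvd _ hp hpc he0, mul_zero]
    _ = _ := sum_characters_eq ℂ _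
end
end

section
/- Let q ≥ 2 and a be integers with 1 ≤ a < q. Then | Σ_{n ≥ 1, n ≡ a (mod q)} (Λ(n)/n)·e^{−n/q²} − Λ(a)/a | ≤ 2·(log q)²/q + 3.935·(log q)/q. -/
open ArithmeticFunction

attribute [local instance] Classical.propDecidable

noncomputable section

open Real

/-!
Write `n = a + k q`. The term `k = 0` differs from `Λ(a)/a` by at most `Λ(a)/q² ≤ log q/q²`,
since `1 - e^{-s} ≤ s`. For `k ≥ 1` we have `k q ≤ n < (k+1) q`, hence `log n ≤ 2 log q + k/q`
(from `log (n/q²) ≤ n/q² - 1`), so with `x = e^{-1/q}` the `k`-th term is at most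
`(2 log q / q) x^k/k + x^k/q²`. Summing the logarithmic and geometric series and using
`e^{1/q} - 1 ≥ 1/q` bounds the tail by `(2 log q / q) log (q+1) + 1/q`; the lower-order terms fit
into `3.935 log q / q` because `log q ≥ log 2`.
-/

theorem tsum_ite_natCast_eq_natCast {M : Type*} [AddCommMonoid M] [TopologicalSpace M]
    {q a : ℕ} (haq : a < q) (f : ℕ → M) :
    (∑' n : ℕ, if (n : ZMod q) = (a : ZMod q) then f n else 0) = ∑' k : ℕ, f (a + k * q) := by
  have hinj : Function.Injective (fun k : ℕ => a + k * q) := fun k₁ k₂ h =>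
    Nat.eq_of_mul_eq_mul_right (by omega) (Nat.add_left_cancel h)
  refine (hinj.tsum_eq fun n hn => ?_).symm.trans (tsum_congr fun k => ?_)
  · have hn' : (n : ZMod q) = a := by
      by_contra h
      exact hn (if_neg h)
    rw [ZMod.natCast_eq_natCast_iff', Nat.mod_eq_of_lt haq] at hn'
    exact ⟨n / q, by simp only [← hn', Nat.mod_add_div']⟩
  · simp

theorem abs_mul_exp_neg_sub_le {c s : ℝ} (hc : 0 ≤ c) (hs : 0 ≤ s) :
    |c * exp (-s) - c| ≤ c * s := by
  have hle : exp (-s) ≤ 1 := exp_le_one_iff.mpr (neg_nonpos.mpr hs)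
  have hge : 1 - s ≤ exp (-s) := by linarith [add_one_le_exp (-s)]
  rw [abs_sub_comm, abs_of_nonneg (by nlinarith)]
  nlinarith

theorem exp_neg_div_one_sub_exp_neg_le {t : ℝ} (ht : 0 < t) :
    exp (-t) / (1 - exp (-t)) ≤ 1 / t := by
  have hpos : 0 < exp t - 1 := by linarith [add_one_le_exp t]
  have hx : exp (-t) / (1 - exp (-t)) = 1 / (exp t - 1) := by
    rw [exp_neg]
    field_simp [(exp_pos t).ne']
  rw [hx]
  exact one_div_le_one_div_of_le ht (by linarith [add_one_le_exp t])

theorem neg_log_one_sub_exp_neg_le {t : ℝ} (ht : 0 < t) :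
    -Real.log (1 - exp (-t)) ≤ Real.log (1 + 1 / t) := by
  have hx : 0 < 1 - exp (-t) := by
    simpa using exp_lt_one_iff.mpr (neg_lt_zero.mpr ht)
  rw [← log_inv]
  refine log_le_log (inv_pos.mpr hx) ?_
  calc (1 - exp (-t))⁻¹ = 1 + exp (-t) / (1 - exp (-t)) := by field_simp; ring
    _ ≤ 1 + 1 / t := by linarith [exp_neg_div_one_sub_exp_neg_le ht]

theorem log_natCast_le_two_mul_log_add {q n k : ℕ} (hn : 0 < n) (hnk : n < (k + 1) * q) :
    Real.log n ≤ 2 * Real.log q + (k : ℝ) / q := by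
  have hq : (1 : ℝ) ≤ q := by exact_mod_cast (show 1 ≤ q by nlinarith)
  have hnk' : (n : ℝ) < (k + 1) * q := by exact_mod_cast hnk
  have hlog := log_le_sub_one_of_pos (show 0 < (n : ℝ) / q ^ 2 by positivity)
  rw [log_div (by positivity) (by positivity), log_pow] at hlog
  have : (n : ℝ) / q ^ 2 ≤ (k + 1) / q := by
    rw [div_le_div_iff₀ (by positivity) (by positivity)]
    nlinarith
  have : ((k : ℝ) + 1) / q - 1 ≤ k / q := by
    rw [add_div, one_div]
    linarith [inv_le_one_of_one_le₀ hq]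
  push_cast at hlog
  linarith

def smoothedVonMangoldt (q n : ℕ) : ℝ := Λ n / n * exp (-(n : ℝ) / (q : ℝ) ^ 2)

theorem smoothedVonMangoldt_nonneg (q n : ℕ) : 0 ≤ smoothedVonMangoldt q n :=
  mul_nonneg (div_nonneg vonMangoldt_nonneg n.cast_nonneg) (exp_pos _).le

theorem smoothedVonMangoldt_le {q n k : ℕ} (hk : 1 ≤ k) (hkn : k * q ≤ n)
    (hnk : n < (k + 1) * q) :
    smoothedVonMangoldt q n ≤
      2 * Real.log q / q * (exp (-(1 / q)) ^ k / k) + exp (-(1 / q)) ^ k / q ^ 2 := by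
  have hq : 0 < q := by nlinarith
  have hk' : (1 : ℝ) ≤ k := by exact_mod_cast hk
  have hkn' : (k : ℝ) * q ≤ n := by exact_mod_cast hkn
  have hq' : (0 : ℝ) < q := by exact_mod_cast hq
  have hn : 0 < n := by nlinarith
  have hΛ : Λ n / n ≤ 2 * Real.log q / q / k + 1 / q ^ 2 := by
    calc Λ n / n ≤ (2 * Real.log q + (k : ℝ) / q) / (k * q) :=
          div_le_div₀ (by positivity) (vonMangoldt_le_log.trans
            (log_natCast_le_two_mul_log_add hn hnk)) (by positivity) hkn'
      _ = 2 * Real.log q / q / k + 1 / q ^ 2 := by field_simp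
  have hexp : exp (-(n : ℝ) / q ^ 2) ≤ exp (-(1 / q)) ^ k := by
    rw [← exp_nat_mul, exp_le_exp, neg_div, mul_neg, neg_le_neg_iff,
      le_div_iff₀ (by positivity)]
    calc k * (1 / q) * (q : ℝ) ^ 2 = k * q := by field_simp
      _ ≤ n := hkn'
  calc smoothedVonMangoldt q n ≤ (2 * Real.log q / q / k + 1 / q ^ 2) * exp (-(1 / q)) ^ k :=
        mul_le_mul hΛ hexp (exp_pos _).le (by positivity)
    _ = _ := by ring

theorem tsum_smoothedVonMangoldt_tail_le {q a : ℕ} (haq : a < q) :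
    Summable (fun k => smoothedVonMangoldt q (a + (k + 1) * q)) ∧
      ∑' k, smoothedVonMangoldt q (a + (k + 1) * q) ≤
        2 * Real.log q / q * Real.log (1 + q) + 1 / q := by
  have hq : (0 : ℝ) < q := by exact_mod_cast (show 0 < q by omega)
  set x := exp (-(1 / q : ℝ))
  have hx0 : 0 < x := exp_pos _
  have hx1 : x < 1 := exp_lt_one_iff.mpr (by simp [hq])
  have hgeom : HasSum (fun k : ℕ => x ^ (k + 1)) (x / (1 - x)) := by
    simpa [pow_succ', div_eq_mul_inv] using (hasSum_geometric_of_lt_one hx0.le hx1).mul_left x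
  have hmajor := ((Real.hasSum_pow_div_log_of_abs_lt_one (by rwa [abs_of_pos hx0])).mul_left
    (2 * Real.log q / q)).add (hgeom.div_const ((q : ℝ) ^ 2))
  have hterm (k : ℕ) : smoothedVonMangoldt q (a + (k + 1) * q) ≤
      2 * Real.log q / q * (x ^ (k + 1) / (k + 1)) + x ^ (k + 1) / q ^ 2 := by
    exact_mod_cast smoothedVonMangoldt_le (n := a + (k + 1) * q) (k := k + 1) (by omega) (by omega)
      (by nlinarith)
  have hsum := hmajor.summable.of_nonneg_of_le (fun k => smoothedVonMangoldt_nonneg _ _) hterm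
  refine ⟨hsum, (hsum.tsum_le_tsum hterm hmajor.summable).trans ?_⟩
  rw [hmajor.tsum_eq]
  have hlog := neg_log_one_sub_exp_neg_le (one_div_pos.mpr hq)
  have hgeo := exp_neg_div_one_sub_exp_neg_le (one_div_pos.mpr hq)
  rw [one_div_one_div] at hlog hgeo
  calc 2 * Real.log q / q * -Real.log (1 - x) + x / (1 - x) / q ^ 2
      ≤ 2 * Real.log q / q * Real.log (1 + q) + q / q ^ 2 := by gcongr
    _ = 2 * Real.log q / q * Real.log (1 + q) + 1 / q := by field_simp

theorem abs_smoothedVonMangoldt_sub_le {q a : ℕ} (haq : a ≤ q) :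
    |smoothedVonMangoldt q a - Λ a / a| ≤ Real.log q / q ^ 2 := by
  have hΛ : Λ a ≤ Real.log q := by
    rcases Nat.eq_zero_or_pos a with rfl | ha
    · simpa using Real.log_natCast_nonneg q
    · exact vonMangoldt_le_log.trans (Real.log_le_log (by positivity) (by exact_mod_cast haq))
  calc |smoothedVonMangoldt q a - Λ a / a| ≤ Λ a / a * (a / q ^ 2) := by
        rw [smoothedVonMangoldt, neg_div]
        exact abs_mul_exp_neg_sub_le (div_nonneg vonMangoldt_nonneg a.cast_nonneg) (by positivity)
    _ = Λ a * (a / a) / q ^ 2 := by ring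
    _ ≤ Λ a / q ^ 2 := by
        gcongr
        exact mul_le_of_le_one_right vonMangoldt_nonneg (div_self_le_one _)
    _ ≤ Real.log q / q ^ 2 := by gcongr

theorem log_div_sq_add_two_mul_log_mul_log_one_add_le {q : ℝ} (hq : 2 ≤ q) :
    Real.log q / q ^ 2 + (2 * Real.log q / q * Real.log (1 + q) + 1 / q) ≤
      2 * Real.log q ^ 2 / q + 3.935 * Real.log q / q := by
  have hq0 : 0 < q := by linarith
  have hl : 0.69 < Real.log q :=
    (Real.log_two_gt_d9.trans_le' (by norm_num)).trans_le (Real.log_le_log two_pos hq)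
  have hlog : Real.log (1 + q) ≤ Real.log q + 1 / q := by
    have h := Real.log_le_sub_one_of_pos (show 0 < (1 + q) / q by positivity)
    rw [Real.log_div (by positivity) hq0.ne'] at h
    have : (1 + q) / q - 1 = 1 / q := by field_simp; ring
    linarith
  have hu : 3 * Real.log q / q ≤ 3 * Real.log q / 2 := by gcongr
  calc Real.log q / q ^ 2 + (2 * Real.log q / q * Real.log (1 + q) + 1 / q)
      ≤ Real.log q / q ^ 2 + (2 * Real.log q / q * (Real.log q + 1 / q) + 1 / q) := by gcongr
    _ = (2 * Real.log q ^ 2 + (3 * Real.log q / q + 1)) / q := by field_simp; ring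
    _ ≤ (2 * Real.log q ^ 2 + 3.935 * Real.log q) / q := by gcongr; linarith
    _ = 2 * Real.log q ^ 2 / q + 3.935 * Real.log q / q := by ring

/-- **Proposition (the first term dominates the smoothed sum).** If `1 ≤ a < q`, then
`|Σ_{n ≡ a (mod q)} (Λ(n)/n) e^{−n/q²} − Λ(a)/a| ≤ 2(log q)²/q + 3.935 (log q)/q`. -/
theorem smoothed_vonMangoldt_progression (q a : ℕ) (ha : 1 ≤ a) (haq : a < q) :
    |(∑' n : ℕ, if (n : ZMod q) = (a : ZMod q) then
        vonMangoldt n / n * Real.exp (-(n : ℝ) / (q : ℝ) ^ 2) else 0)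
      - vonMangoldt a / a|
      ≤ 2 * (Real.log q) ^ 2 / q + 3.935 * Real.log q / q := by
  show |(∑' n : ℕ, if (n : ZMod q) = a then smoothedVonMangoldt q n else 0) - Λ a / a| ≤ _
  obtain ⟨hsum, htail⟩ := tsum_smoothedVonMangoldt_tail_le haq
  have hsum' : Summable fun k => smoothedVonMangoldt q (a + k * q) :=
    (summable_nat_add_iff 1).mp hsum
  rw [tsum_ite_natCast_eq_natCast haq, hsum'.tsum_eq_zero_add]
  simp only [zero_mul, add_zero]
  calc |smoothedVonMangoldt q a + ∑' k, smoothedVonMangoldt q (a + (k + 1) * q) - Λ a / a|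
      ≤ |smoothedVonMangoldt q a - Λ a / a| +
          ∑' k, smoothedVonMangoldt q (a + (k + 1) * q) := by
        rw [add_sub_right_comm]
        refine (abs_add_le _ _).trans_eq ?_
        rw [abs_of_nonneg (tsum_nonneg fun k => smoothedVonMangoldt_nonneg _ _)]
    _ ≤ Real.log q / q ^ 2 + (2 * Real.log q / q * Real.log (1 + q) + 1 / q) :=
        add_le_add (abs_smoothedVonMangoldt_sub_le haq.le) htail
    _ ≤ 2 * Real.log q ^ 2 / q + 3.935 * Real.log q / q :=
        log_div_sq_add_two_mul_log_mul_log_one_add_le (by exact_mod_cast (show 2 ≤ q by omega))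
end
end

section
/- For every integer q ≥ 2, Σ_{p|q} (log p)/(p−1) ≤ 1.02·log log q + 3.04, where the sum runs over the distinct prime divisors p of q. -/
/-!
Write `L = log q`. Since `∑_{p ∣ q} log p ≤ L`, the prime factors above a cutoff `n` contribute
at most `L / n`. For `L ≤ 16` take `n = 4`: the sum is at most `log 2 + log 3 / 2 + L / 4`, and
this lies below `1.02 log L + 3.04` because `log` lies above its chord on `[1/2, 16]`.
For `L > 16` take `n = ⌊3L/2⌋` and split `log p / (p - 1) = log p / p + log p / (p (p - 1))`.
The first part obeys Mertens' bound `∑_{p ≤ n} log p / p ≤ log n + log 4 - 1 + O(log n / n)`,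
obtained by comparing `log n!` (Legendre's formula, Stirling's upper bound) with Chebyshev's
`θ(n) ≤ n log 4`; the second part is bounded by telescoping.
-/

open Real Finset
open scoped Nat

theorem sum_factorization_mul_log_le_log (m : ℕ) (s : Finset ℕ) :
    ∑ p ∈ s, m.factorization p * log p ≤ log m := by
  rw [log_nat_eq_sum_factorization, Finsupp.sum]
  calc ∑ p ∈ s, m.factorization p * log p
      = ∑ p ∈ s ∩ m.factorization.support, m.factorization p * log p := by
        refine (sum_subset inter_subset_left fun p hps hp ↦ ?_).symm
        rw [Finsupp.notMem_support_iff.mp fun h ↦ hp (mem_inter.mpr ⟨hps, h⟩)]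
        simp
    _ ≤ ∑ p ∈ m.factorization.support, m.factorization p * log p :=
        sum_le_sum_of_subset_of_nonneg inter_subset_right fun p _ _ ↦ by positivity

theorem sum_primeFactors_log_le_log (q : ℕ) : ∑ p ∈ q.primeFactors, log p ≤ log q :=
  calc ∑ p ∈ q.primeFactors, log p ≤ ∑ p ∈ q.primeFactors, q.factorization p * log p := by
        refine sum_le_sum fun p hp ↦ le_mul_of_one_le_left (log_natCast_nonneg p) ?_
        rw [← Nat.support_factorization, Finsupp.mem_support_iff] at hp
        exact_mod_cast Nat.one_le_iff_ne_zero.mpr hp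
    _ ≤ log q := sum_factorization_mul_log_le_log q _

theorem Nat.Prime.div_le_factorization_factorial {p : ℕ} (hp : p.Prime) (n : ℕ) :
    n / p ≤ (n !).factorization p := by
  rw [Nat.factorization_factorial hp (Nat.lt_add_of_pos_right two_pos : Nat.log p n < _ + 2)]
  simpa using single_le_sum (f := fun i ↦ n / p ^ i) (fun _ _ ↦ Nat.zero_le _)
    (by simp : 1 ∈ Ico 1 (Nat.log p n + 2))

theorem sum_primesLE_div_mul_log_le_log_factorial (n : ℕ) :
    ∑ p ∈ Nat.primesLE n, ((n / p : ℕ) : ℝ) * log p ≤ log n ! :=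
  (sum_le_sum fun p hp ↦ mul_le_mul_of_nonneg_right
    (by exact_mod_cast (Nat.prime_of_mem_primesLE hp).div_le_factorization_factorial n)
    (log_natCast_nonneg p)).trans (sum_factorization_mul_log_le_log _ _)

theorem log_factorial_le {n : ℕ} (hn : n ≠ 0) : log n ! ≤ n * log n - n + log n / 2 + 1 := by
  have hseq : log (Stirling.stirlingSeq n) ≤ log (Stirling.stirlingSeq 1) := by
    obtain ⟨k, rfl⟩ := Nat.exists_eq_succ_of_ne_zero hn
    exact Stirling.log_stirlingSeq'_antitone (Nat.zero_le k)
  have hn0 : (0 : ℝ) < n := by positivity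
  rw [Stirling.log_stirlingSeq_formula, Stirling.stirlingSeq_one,
    log_div (exp_pos 1).ne' (by positivity), log_exp, log_sqrt zero_le_two,
    log_mul two_ne_zero hn0.ne', log_div hn0.ne' (exp_pos 1).ne', log_exp] at hseq
  linarith

theorem sum_primesLE_log_div_self_le {n : ℕ} (hn : n ≠ 0) :
    ∑ p ∈ Nat.primesLE n, log p / p ≤ log n + log 4 - 1 + (log n / 2 + 1) / n := by
  have hn0 : (0 : ℝ) < n := by positivity
  have hθ : ∑ p ∈ Nat.primesLE n, log p ≤ log 4 * n := by
    rw [← Chebyshev.theta_eq_sum_primesLE_log]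
    exact Chebyshev.theta_le_log4_mul_x hn0.le
  have hfloor : ∀ p : ℕ, (n : ℝ) / p ≤ ((n / p : ℕ) : ℝ) + 1 := fun p ↦ by
    rw [← Nat.floor_div_eq_div (K := ℝ)]
    exact (Nat.lt_floor_add_one _).le
  have key : n * ∑ p ∈ Nat.primesLE n, log p / p ≤ log n ! + log 4 * n :=
    calc n * ∑ p ∈ Nat.primesLE n, log p / p = ∑ p ∈ Nat.primesLE n, (n : ℝ) / p * log p := by
          rw [mul_sum]; exact sum_congr rfl fun p _ ↦ by ring
      _ ≤ ∑ p ∈ Nat.primesLE n, (((n / p : ℕ) : ℝ) + 1) * log p :=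
          sum_le_sum fun p _ ↦ mul_le_mul_of_nonneg_right (hfloor p) (log_natCast_nonneg p)
      _ = ∑ p ∈ Nat.primesLE n, ((n / p : ℕ) : ℝ) * log p + ∑ p ∈ Nat.primesLE n, log p := by
          rw [← sum_add_distrib]; exact sum_congr rfl fun p _ ↦ by ring
      _ ≤ log n ! + log 4 * n := add_le_add (sum_primesLE_div_mul_log_le_log_factorial n) hθ
  rw [← le_div_iff₀' hn0] at key
  refine key.trans ?_
  rw [div_le_iff₀ hn0]
  have := log_factorial_le hn
  field_simp
  linarith

theorem log_div_mul_sub_one_le_sub {x : ℝ} (hx : 1 < x) :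
    log x / (x * (x - 1)) ≤ (log x + 1) / (x - 1) - (log (x + 1) + 1) / x := by
  have hx0 : 0 < x := by linarith
  have hx1 : 0 < x - 1 := by linarith
  have hstep : log (x + 1) - log x ≤ 1 / x := by
    rw [← log_div (by linarith) hx0.ne']
    exact (log_le_sub_one_of_pos (by positivity)).trans_eq (by field_simp; ring)
  rw [div_sub_div _ _ hx1.ne' hx0.ne', mul_comm (x - 1) x,
    div_le_div_iff_of_pos_right (by positivity)]
  have : (x - 1) * (log (x + 1) - log x) ≤ 1 := by
    calc (x - 1) * (log (x + 1) - log x) ≤ (x - 1) * (1 / x) := by gcongr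
      _ ≤ 1 := by rw [mul_one_div, div_le_one hx0]; linarith
  nlinarith

theorem sum_Ico_log_div_mul_sub_one_le {a : ℕ} (ha : 2 ≤ a) (b : ℕ) :
    ∑ m ∈ Ico a b, log m / (m * (m - 1)) ≤ (log a + 1) / (a - 1) := by
  set g : ℕ → ℝ := fun m ↦ (log m + 1) / (m - 1)
  have hg : ∀ m, 2 ≤ m → 0 ≤ g m := fun m hm ↦ by
    have : (2 : ℝ) ≤ m := by exact_mod_cast hm
    exact div_nonneg (by linarith [log_natCast_nonneg m]) (by linarith)
  rcases le_or_gt b a with hba | hab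
  · rw [Ico_eq_empty_of_le hba, sum_empty]
    exact hg a ha
  calc ∑ m ∈ Ico a b, log m / (m * (m - 1)) ≤ ∑ m ∈ Ico a b, -(g (m + 1) - g m) := by
        refine sum_le_sum fun m hm ↦ ?_
        have : (1 : ℝ) < m := by exact_mod_cast (ha.trans (mem_Ico.mp hm).1)
        simpa [g] using log_div_mul_sub_one_le_sub this
    _ = g a - g b := by rw [sum_neg_distrib, sum_Ico_sub _ hab.le, neg_sub]
    _ ≤ g a := sub_le_self _ (hg b (by omega))

theorem sum_primesLE_log_div_mul_sub_one_le (n : ℕ) :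
    ∑ p ∈ Nat.primesLE n, log p / (p * (p - 1)) ≤ log 2 / 2 + log 3 / 6 + (log 4 + 1) / 3 := by
  have hsub : Nat.primesLE n ⊆ Ico 2 (n + 4) := fun p hp ↦ by
    have := Nat.mem_primesLE.mp hp
    exact mem_Ico.mpr ⟨this.2.two_le, by omega⟩
  have hnonneg : ∀ m ∈ Ico 2 (n + 4), 0 ≤ log m / (m * (m - 1) : ℝ) := fun m hm ↦ by
    have : (2 : ℝ) ≤ m := by exact_mod_cast (mem_Ico.mp hm).1
    exact div_nonneg (log_natCast_nonneg m) (by nlinarith)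
  calc ∑ p ∈ Nat.primesLE n, log p / (p * (p - 1))
      ≤ ∑ m ∈ Ico 2 (n + 4), log m / (m * (m - 1)) :=
        sum_le_sum_of_subset_of_nonneg hsub fun m hm _ ↦ hnonneg m hm
    _ = ∑ m ∈ Ico (2 : ℕ) 4, log m / (m * (m - 1)) + ∑ m ∈ Ico 4 (n + 4), log m / (m * (m - 1)) :=
        (sum_Ico_consecutive _ (by norm_num) (by omega)).symm
    _ ≤ log 2 / 2 + log 3 / 6 + (log 4 + 1) / 3 := by
        have := sum_Ico_log_div_mul_sub_one_le (a := 4) (by norm_num) (n + 4)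
        norm_num [sum_Ico_succ_top] at this ⊢
        linarith

theorem sum_primesLE_log_div_sub_one_le {n : ℕ} (hn : n ≠ 0) :
    ∑ p ∈ Nat.primesLE n, log p / (p - 1) ≤
      log n + log 4 - 1 + (log n / 2 + 1) / n + (log 2 / 2 + log 3 / 6 + (log 4 + 1) / 3) := by
  have hsplit : ∑ p ∈ Nat.primesLE n, log p / (p - 1) =
      ∑ p ∈ Nat.primesLE n, log p / p + ∑ p ∈ Nat.primesLE n, log p / (p * (p - 1)) := by
    rw [← sum_add_distrib]
    refine sum_congr rfl fun p hp ↦ ?_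
    have : (2 : ℝ) ≤ p := by exact_mod_cast (Nat.prime_of_mem_primesLE hp).two_le
    have : (p : ℝ) - 1 ≠ 0 := by linarith
    field_simp
    ring
  rw [hsplit]
  exact add_le_add (sum_primesLE_log_div_self_le hn) (sum_primesLE_log_div_mul_sub_one_le n)

theorem sum_primeFactors_log_div_sub_one_le (q : ℕ) {n : ℕ} (hn : n ≠ 0) :
    ∑ p ∈ q.primeFactors, log p / (p - 1) ≤ ∑ p ∈ Nat.primesLE n, log p / (p - 1) + log q / n := by
  rw [← sum_filter_add_sum_filter_not q.primeFactors (· ≤ n)]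
  refine add_le_add ?_ ?_
  · refine sum_le_sum_of_subset_of_nonneg (fun p hp ↦ ?_) fun p hp _ ↦ ?_
    · have := mem_filter.mp hp
      exact Nat.mem_primesLE.mpr ⟨this.2, Nat.prime_of_mem_primeFactors this.1⟩
    · have : (1 : ℝ) ≤ p := by exact_mod_cast (Nat.prime_of_mem_primesLE hp).one_le
      exact div_nonneg (log_natCast_nonneg p) (by linarith)
  · calc ∑ p ∈ q.primeFactors with ¬p ≤ n, log p / (p - 1)
        ≤ ∑ p ∈ q.primeFactors with ¬p ≤ n, log p / n := by
          refine sum_le_sum fun p hp ↦ ?_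
          have : (n : ℝ) + 1 ≤ p := by exact_mod_cast not_le.mp (mem_filter.mp hp).2
          exact div_le_div_of_nonneg_left (log_natCast_nonneg p) (by positivity) (by linarith)
      _ ≤ ∑ p ∈ q.primeFactors, log p / n :=
          sum_le_sum_of_subset_of_nonneg (filter_subset _ _) fun p _ _ ↦ by positivity
      _ ≤ log q / n := by
          rw [← sum_div]
          exact div_le_div_of_nonneg_right (sum_primeFactors_log_le_log q) (by positivity)

/-- The left-hand side is the chord of `log` between `1/2` and `16`. -/
theorem log_two_mul_le_log {x : ℝ} (h₁ : 1 / 2 ≤ x) (h₂ : x ≤ 16) :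
    log 2 * (10 * x - 36) / 31 ≤ log x := by
  have hchord := strictConcaveOn_log_Ioi.concaveOn.2
    (Set.mem_Ioi.mpr (by norm_num : (0 : ℝ) < 1 / 2)) (Set.mem_Ioi.mpr (by norm_num : (0 : ℝ) < 16))
    (by linarith : 0 ≤ (16 - x) / 31 * 2) (by linarith : 0 ≤ (x - 1 / 2) / 31 * 2) (by ring)
  have h16 : log 16 = 4 * log 2 := by
    rw [show (16 : ℝ) = 2 ^ 4 by norm_num, log_pow]; norm_num
  simp only [smul_eq_mul] at hchord
  rw [show (16 - x) / 31 * 2 * (1 / 2) + (x - 1 / 2) / 31 * 2 * 16 = x by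
    ring, one_div, log_inv, h16] at hchord
  linarith

theorem sum_primeFactors_log_div_sub_one_le_of_log_le {q : ℕ} (hq : 2 ≤ q) (hL : log q ≤ 16) :
    ∑ p ∈ q.primeFactors, log p / (p - 1) ≤ 1.02 * log (log q) + 3.04 := by
  have hprimes : ∑ p ∈ Nat.primesLE 4, log p / (p - 1) = log 2 + log 3 / 2 := by
    rw [show Nat.primesLE 4 = {2, 3} by decide]
    norm_num
  have hsum := sum_primeFactors_log_div_sub_one_le q four_ne_zero
  have hq2 : log 2 ≤ log q := log_le_log two_pos (by exact_mod_cast hq)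
  have hchord := log_two_mul_le_log (x := log q) (by linarith [log_two_gt_d9]) hL
  rw [hprimes] at hsum
  nlinarith [log_two_gt_d9, log_two_lt_d9, log_three_lt_d9]

theorem sum_primeFactors_log_div_sub_one_le_of_sixteen_lt_log {q : ℕ} (hL : 16 < log q) :
    ∑ p ∈ q.primeFactors, log p / (p - 1) ≤ 1.02 * log (log q) + 3.04 := by
  set L := log q
  set n := ⌊3 * L / 2⌋₊
  have hn24 : (24 : ℝ) ≤ n := by exact_mod_cast Nat.le_floor (by push_cast; linarith)
  have hn0 : n ≠ 0 := by rintro h; norm_num [h] at hn24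
  have hnpos : (0 : ℝ) < n := by linarith
  have hcutoff := sum_primeFactors_log_div_sub_one_le q hn0
  have hprimes := sum_primesLE_log_div_sub_one_le hn0
  have hlogn : log n ≤ log 3 - log 2 + log L := by
    rw [← log_div three_ne_zero two_ne_zero, ← log_mul (by norm_num) (by linarith)]
    exact log_le_log hnpos ((Nat.floor_le (by linarith)).trans_eq (by ring))
  have hlogn_div : log n / n ≤ (3 * log 2 + log 3) / 24 := by
    have h24 : log 24 = 3 * log 2 + log 3 := by
      rw [show (24 : ℝ) = 2 ^ 3 * 3 by norm_num, log_mul (by norm_num) (by norm_num), log_pow]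
      norm_num
    rw [← h24]
    have he : exp 1 ≤ 24 := by linarith [exp_one_lt_d9]
    exact log_div_self_antitoneOn (Set.mem_Ici.mpr he) (Set.mem_Ici.mpr (he.trans hn24)) hn24
  have hLn : L / n ≤ 2 / 3 + 1 / 36 := by
    have : 3 * L / 2 < n + 1 := Nat.lt_floor_add_one _
    rw [div_le_iff₀ hnpos]
    linarith
  have hinv : 1 / (n : ℝ) ≤ 1 / 24 := one_div_le_one_div_of_le (by norm_num) hn24
  have hlog4 : log 4 = 2 * log 2 := by
    rw [show (4 : ℝ) = 2 ^ 2 by norm_num, log_pow]; norm_num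
  have hlogL : 0 ≤ log L := log_nonneg (by linarith)
  have hexpand : (log n / 2 + 1) / n = log n / n / 2 + 1 / n := by ring
  linarith [log_two_lt_d9, log_three_lt_d9]

/-- **Lemma.** For every integer `q ≥ 2`,
`Σ_{p∣q} (log p)/(p−1) ≤ 1.02 log log q + 3.04`. -/
theorem sum_log_p_div_p_sub_one_bound (q : ℕ) (hq : 2 ≤ q) :
    (∑ p ∈ q.primeFactors, Real.log p / (p - 1))
      ≤ 1.02 * Real.log (Real.log q) + 3.04 := by
  rcases le_or_gt (log q) 16 with hL | hL
  · exact sum_primeFactors_log_div_sub_one_le_of_log_le hq hL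
  · exact sum_primeFactors_log_div_sub_one_le_of_sixteen_lt_log hL
end

section
/- Let r and s be rational numbers, and assume that it is NOT the case that there exists a positive integer m with r = 1/m and m·s ∈ ℤ (i.e., it is not true that r is the reciprocal of a positive integer with s/r an integer). Then there exists a constant c > 0, depending only on r and s, such that for all positive integers q and y, if r + s·q is an integer and (r + s·q)·y ≡ 1 (mod q), then y ≥ c·q. -/
/-!
Clear denominators: with `N > 0` and `A = N r`, `B = N s` integers, `N k = A + B q ≡ A (mod q)`,
so `k y ≡ 1` gives `q ∣ A y - N`. Unless `r y = 1` this is a nonzero multiple of `q`, whence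
`q ≤ |A y - N| ≤ (|A| + N) y`. If `r y = 1`, then `r = 1 / y` and `y s = (k y - 1) / q` is an
integer, which is the excluded case.
-/

lemma Rat.exists_pos_nat_mul_eq_int_pair (r s : ℚ) :
    ∃ N : ℕ, 0 < N ∧ ∃ A B : ℤ, r * N = A ∧ s * N = B := by
  refine ⟨r.den * s.den, Nat.mul_pos r.pos s.pos, r.num * s.den, s.num * r.den, ?_, ?_⟩
  · push_cast
    rw [← Rat.mul_den_eq_num r]
    ring
  · push_cast
    rw [← Rat.mul_den_eq_num s]
    ring

section

variable {r s : ℚ} {q : ℕ} {y k : ℤ}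

lemma dvd_sub_of_add_mul_eq_of_modEq {N : ℕ} {A B : ℤ} (hA : r * N = A) (hB : s * N = B)
    (hk : r + s * q = k) (hy : k * y ≡ 1 [ZMOD q]) : (q : ℤ) ∣ A * y - N := by
  have hNk : (N : ℤ) * k = A + B * q := by
    have : (N : ℚ) * k = A + B * q := by rw [← hk, ← hA, ← hB]; ring
    exact_mod_cast this
  have hA_modEq : A ≡ N * k [ZMOD q] := Int.modEq_iff_dvd.mpr ⟨B, by rw [hNk]; ring⟩
  have hAy : A * y ≡ N [ZMOD q] :=
    calc A * y ≡ N * k * y [ZMOD q] := hA_modEq.mul_right y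
      _ = N * (k * y) := by ring
      _ ≡ N * 1 [ZMOD q] := hy.mul_left N
      _ = N := mul_one _
  exact hAy.symm.dvd

lemma exists_int_mul_eq_of_mul_eq_one (hq : 0 < q) (hry : r * y = 1) (hk : r + s * q = k)
    (hy : k * y ≡ 1 [ZMOD q]) : ∃ t : ℤ, (y : ℚ) * s = t := by
  obtain ⟨t, ht⟩ := hy.symm.dvd
  refine ⟨t, mul_right_cancel₀ (Nat.cast_ne_zero.mpr hq.ne' : (q : ℚ) ≠ 0) ?_⟩
  have htQ : (k : ℚ) * y - 1 = q * t := by exact_mod_cast ht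
  linear_combination (y : ℚ) * hk + htQ - hry

end

lemma Int.le_abs_add_mul_of_dvd_sub {q A N y : ℤ} (hy : 1 ≤ y) (hN : 0 ≤ N)
    (hdvd : q ∣ A * y - N) (hne : A * y ≠ N) : q ≤ (|A| + N) * y := by
  calc q ≤ |A * y - N| := Int.le_of_dvd (abs_pos.mpr (sub_ne_zero.mpr hne)) ((dvd_abs _ _).mpr hdvd)
    _ ≤ |A * y| + |N| := abs_sub _ _
    _ = |A| * y + N := by rw [abs_mul, abs_of_pos (by omega : 0 < y), abs_of_nonneg hN]
    _ ≤ (|A| + N) * y := by nlinarith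

/-- **Lemma (inverses of `r + sq` mod `q` are large).** Let `r, s ∈ ℚ`, and assume it is not
the case that `r` is the reciprocal of a positive integer `m` with `m·s ∈ ℤ` (i.e. with
`s/r ∈ ℤ`). Then there is a constant `c > 0`, depending only on `r` and `s`, such that for
all positive integers `q` and `y`: if `r + s·q` is an integer `k` and `k·y ≡ 1 (mod q)`,
then `y ≥ c·q`. -/
theorem inverse_is_big (r s : ℚ)
    (h : ¬ ∃ m : ℕ, 0 < m ∧ r = 1 / (m : ℚ) ∧ ∃ k : ℤ, (m : ℚ) * s = (k : ℚ)) :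
    ∃ c : ℝ, 0 < c ∧ ∀ q y : ℕ, 0 < q → 0 < y →
      ∀ k : ℤ, r + s * (q : ℚ) = (k : ℚ) → k * (y : ℤ) ≡ 1 [ZMOD (q : ℤ)] →
        c * q ≤ (y : ℝ) := by
  obtain ⟨N, hN, A, B, hA, hB⟩ := Rat.exists_pos_nat_mul_eq_int_pair r s
  have hC : (0 : ℝ) < |A| + N := by positivity
  refine ⟨(|A| + N : ℝ)⁻¹, inv_pos.mpr hC, fun q y hq hy k hk hky => ?_⟩
  have hry : r * y ≠ 1 := by
    intro hry
    refine h ⟨y, hy, eq_one_div_of_mul_eq_one_left hry, ?_⟩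
    exact_mod_cast exists_int_mul_eq_of_mul_eq_one (y := y) hq (by exact_mod_cast hry) hk hky
  have hAy : A * (y : ℤ) ≠ N := by
    intro hAy
    have : r * y * N = 1 * N := by
      rw [mul_right_comm, hA, one_mul]; exact_mod_cast hAy
    exact hry (mul_right_cancel₀ (by positivity) this)
  have hle : (q : ℤ) ≤ (|A| + N) * y :=
    Int.le_abs_add_mul_of_dvd_sub (by omega) (by positivity)
      (dvd_sub_of_add_mul_eq_of_modEq hA hB hk hky) hAy
  rw [inv_mul_le_iff₀ hC]
  exact_mod_cast hle
end
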